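/- Let M ∈ ℝ^{L×L} be a symmetric positive semidefinite matrix with eigenvalues λ_1 ≥ λ_2 ≥ … ≥ λ_L and let G ∈ ℝ^{L×K} have as columns orthonormal eigenvectors of M corresponding to λ_1, …, λ_K. Then for every matrix P ∈ ℝ^{L×L} satisfying 0 ⪯ P ⪯ I (in the Loewner order) and tr(P) = K, one has ⟨M, GGᵀ − P⟩ ≥ (λ_K − λ_{K+1})(K − ⟨GGᵀ, P⟩), where ⟨A,B⟩ = tr(AᵀB). -/

import Mathlib

/-!
Conjugating by `U` diagonalises `M` and replaces `P` by `D = UᵀPU`, which still satisfies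
`0 ⪯ D ⪯ I`; so its diagonal `d` lies in `[0,1]` and sums to `K`. The three inner products become
`⟨M, GGᵀ⟩ = ∑_{j ≤ K} λ_j`, `⟨M, P⟩ = ∑_j λ_j d_j` and `⟨GGᵀ, P⟩ = ∑_{j ≤ K} d_j`. The deficit
`K - ∑_{j ≤ K} d_j` equals both `∑_{j ≤ K} (1 - d_j)` and `∑_{j > K} d_j`; weighting the first sum
by `λ_j ≥ λ_K` and the second by `λ_j ≤ λ_{K+1}` gives the inequality.
-/

open Finset

theorem Finset.sub_mul_card_sub_sum_le {ι : Type*} [Fintype ι] [DecidableEq ι] (S : Finset ι)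
    (lam d : ι → ℝ) {a b : ℝ} (hlamS : ∀ j ∈ S, a ≤ lam j) (hlamSc : ∀ j ∉ S, lam j ≤ b)
    (hdS : ∀ j ∈ S, d j ≤ 1) (hdSc : ∀ j ∉ S, 0 ≤ d j) (hsum : ∑ j, d j = #S) :
    (a - b) * (#S - ∑ j ∈ S, d j) ≤ ∑ j ∈ S, lam j - ∑ j, lam j * d j := by
  have hdeficit_in : (#S : ℝ) - ∑ j ∈ S, d j = ∑ j ∈ S, (1 - d j) := by
    simp [sum_sub_distrib]
  have hdeficit_out : (#S : ℝ) - ∑ j ∈ S, d j = ∑ j ∈ Sᶜ, d j := by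
    rw [← hsum, ← sum_add_sum_compl S d]; ring
  have hin : a * ∑ j ∈ S, (1 - d j) ≤ ∑ j ∈ S, lam j * (1 - d j) := by
    rw [mul_sum]
    exact sum_le_sum fun j hj => mul_le_mul_of_nonneg_right (hlamS j hj) (by linarith [hdS j hj])
  have hout : ∑ j ∈ Sᶜ, lam j * d j ≤ b * ∑ j ∈ Sᶜ, d j := by
    rw [mul_sum]
    exact sum_le_sum fun j hj =>
      mul_le_mul_of_nonneg_right (hlamSc j (mem_compl.1 hj)) (hdSc j (mem_compl.1 hj))
  calc (a - b) * (#S - ∑ j ∈ S, d j)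
      = a * ∑ j ∈ S, (1 - d j) - b * ∑ j ∈ Sᶜ, d j := by
        rw [sub_mul, ← hdeficit_in, ← hdeficit_out]
    _ ≤ ∑ j ∈ S, lam j * (1 - d j) - ∑ j ∈ Sᶜ, lam j * d j := sub_le_sub hin hout
    _ = ∑ j ∈ S, lam j - ∑ j, lam j * d j := by
        rw [← sum_add_sum_compl S (fun j => lam j * d j)]
        simp only [mul_sub, mul_one, sum_sub_distrib]
        ring

theorem Fin.mem_map_castLEEmb_univ {K L : ℕ} (h : K ≤ L) (j : Fin L) :
    j ∈ univ.map (Fin.castLEEmb h) ↔ (j : ℕ) < K := by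
  simp only [mem_map, mem_univ, true_and, castLEEmb_apply]
  exact ⟨by rintro ⟨k, rfl⟩; exact k.isLt, fun hj => ⟨⟨j, hj⟩, rfl⟩⟩

namespace Matrix

variable {n m : Type*}

theorem PosSemidef.diag_le_one [DecidableEq n] {A : Matrix n n ℝ} (hA : (1 - A).PosSemidef)
    (i : n) : A i i ≤ 1 := by
  simpa using hA.diag_nonneg (i := i)

theorem PosSemidef.transpose_mul_mul_same [Fintype n] [Fintype m] {P : Matrix n n ℝ}
    (hP : P.PosSemidef) (U : Matrix n m ℝ) : (Uᵀ * P * U).PosSemidef :=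
  conjTranspose_eq_transpose_of_trivial U ▸ hP.conjTranspose_mul_mul_same U

variable [Fintype n]

theorem trace_diagonal_mul [DecidableEq n] (d : n → ℝ) (A : Matrix n n ℝ) :
    (diagonal d * A).trace = ∑ i, d i * A i i := by
  simp [trace, diagonal_mul]

theorem transpose_submatrix_mul_mul_submatrix (U X : Matrix n n ℝ) (e : m → n) :
    (U.submatrix id e)ᵀ * X * U.submatrix id e = (Uᵀ * X * U).submatrix e e := by
  ext; simp [mul_apply]

theorem trace_mul_submatrix_mul_transpose [Fintype m] (U X : Matrix n n ℝ) (e : m ↪ n) :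
    (X * (U.submatrix id e * (U.submatrix id e)ᵀ)).trace =
      ∑ j ∈ univ.map e, (Uᵀ * X * U) j j := by
  rw [← Matrix.mul_assoc, trace_mul_comm, ← Matrix.mul_assoc,
    transpose_submatrix_mul_mul_submatrix, sum_map]
  rfl

variable [DecidableEq n] {U : Matrix n n ℝ}

theorem trace_transpose_mul_mul_of_orthogonal (hU : Uᵀ * U = 1) (X : Matrix n n ℝ) :
    (Uᵀ * X * U).trace = X.trace := by
  rw [trace_mul_cycle, mul_eq_one_comm.mp hU, Matrix.one_mul]

theorem transpose_mul_mul_mul_of_orthogonal (hU : Uᵀ * U = 1) (X Y : Matrix n n ℝ) :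
    Uᵀ * (X * Y) * U = (Uᵀ * X * U) * (Uᵀ * Y * U) := by
  simp only [Matrix.mul_assoc, ← Matrix.mul_assoc U Uᵀ, mul_eq_one_comm.mp hU, Matrix.one_mul]

theorem one_sub_transpose_mul_mul_of_orthogonal (hU : Uᵀ * U = 1) (P : Matrix n n ℝ) :
    1 - Uᵀ * P * U = Uᵀ * (1 - P) * U := by
  rw [Matrix.mul_sub, Matrix.sub_mul, Matrix.mul_one, hU]

end Matrix

open Matrix

/-- Let `M` be a symmetric PSD `L×L` matrix with eigendecomposition
`M = U diag(λ) Uᵀ`, eigenvalues in decreasing order, and let `G` consist of the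
first `K` columns of `U` (orthonormal eigenvectors for the top `K` eigenvalues).
Then for every `P` with `0 ⪯ P ⪯ I` and `tr(P) = K`,
`⟨M, GGᵀ − P⟩ ≥ (λ_K − λ_{K+1})(K − ⟨GGᵀ, P⟩)`. -/
theorem stmt_4 (L K : ℕ) (hKL : K < L)
    (M : Matrix (Fin L) (Fin L) ℝ)
    (lam : Fin L → ℝ) (hlam : Antitone lam)
    (U : Matrix (Fin L) (Fin L) ℝ) (hU : Uᵀ * U = 1)
    (hdecomp : M = U * Matrix.diagonal lam * Uᵀ)
    (G : Matrix (Fin L) (Fin K) ℝ)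
    (hG : ∀ i k, G i k = U i (Fin.castLE hKL.le k))
    (P : Matrix (Fin L) (Fin L) ℝ) (hP : P.PosSemidef) (hIP : (1 - P).PosSemidef)
    (htrP : P.trace = (K : ℝ)) :
    (lam ⟨K - 1, by omega⟩ - lam ⟨K, hKL⟩) * ((K : ℝ) - ((G * Gᵀ)ᵀ * P).trace)
      ≤ (Mᵀ * (G * Gᵀ - P)).trace := by
  set D := Uᵀ * P * U
  set S : Finset (Fin L) := univ.map (Fin.castLEEmb hKL.le)
  have hGU : G = U.submatrix id (Fin.castLEEmb hKL.le) := Matrix.ext hG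
  have hΛ : Uᵀ * M * U = diagonal lam := by
    simp only [hdecomp, Matrix.mul_assoc]
    rw [hU, Matrix.mul_one, ← Matrix.mul_assoc, hU, Matrix.one_mul]
  have hMT : Mᵀ = M := by
    rw [hdecomp, transpose_mul, transpose_mul, transpose_transpose, diagonal_transpose,
      Matrix.mul_assoc]
  have hcard : (#S : ℝ) = K := by simp [S]
  have htop : ((G * Gᵀ)ᵀ * P).trace = ∑ j ∈ S, D j j := by
    rw [transpose_mul, transpose_transpose, trace_mul_comm, hGU,
      trace_mul_submatrix_mul_transpose]
  have hMG : (M * (G * Gᵀ)).trace = ∑ j ∈ S, lam j := by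
    simp only [hGU, trace_mul_submatrix_mul_transpose, hΛ, diagonal_apply_eq, S]
  have hMP : (M * P).trace = ∑ j, lam j * D j j := by
    rw [← trace_transpose_mul_mul_of_orthogonal hU, transpose_mul_mul_mul_of_orthogonal hU, hΛ,
      trace_diagonal_mul]
  have htrD : ∑ j, D j j = #S := by
    rw [hcard, ← htrP, ← trace_transpose_mul_mul_of_orthogonal hU]; rfl
  rw [hMT, Matrix.mul_sub, trace_sub, hMG, hMP, htop, ← hcard]
  refine S.sub_mul_card_sub_sum_le lam (fun j => D j j) ?_ ?_
    (fun j _ => (one_sub_transpose_mul_mul_of_orthogonal hU P ▸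
      hIP.transpose_mul_mul_same U).diag_le_one j)
    (fun j _ => (hP.transpose_mul_mul_same U).diag_nonneg) htrD
  all_goals
    intro j hj
    rw [Fin.mem_map_castLEEmb_univ] at hj
    exact hlam (Fin.le_def.2 (by dsimp only; omega))
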